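/- arXiv:1608.06874 — 2 statements merged into one kernel-verified Lean document; each statement's English description precedes it below -/
import Mathlib

section
/- Let n ≥ 4. The set V = { v : Fin n → Fin 2 | v 0 = 0 and the number of coordinates r with v r = 0 equals ⌊n/2⌋ } is a perfect subset of (Fin n → Fin 2), and its cardinality equals C(n−1, ⌊n/2⌋ − 1). -/
/-- A finite set `V` of vectors `Fin n → Fin a` is `t`-wise perfect if it has at
least `t` elements and for every injective `t`-tuple of elements of `V` and every
string `α : Fin t → Fin a`, some coordinate `r` realizes `α` on the tuple. -/
def TwisePerfect (a t n : ℕ) (V : Finset (Fin n → Fin a)) : Prop :=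
  t ≤ V.card ∧
    ∀ v : Fin t → (Fin n → Fin a), Function.Injective v → (∀ j, v j ∈ V) →
      ∀ α : Fin t → Fin a, ∃ r : Fin n, ∀ j, v j r = α j

private lemma fin2cases (x : Fin 2) : x = 0 ∨ x = 1 := by omega

theorem perfect_lower_construction (n : ℕ) (hn : 4 ≤ n) :
    TwisePerfect 2 2 n (Finset.univ.filter (fun v : Fin n → Fin 2 =>
        v ⟨0, by omega⟩ = 0 ∧
        (Finset.univ.filter (fun r : Fin n => v r = 0)).card = n / 2)) ∧
    (Finset.univ.filter (fun v : Fin n → Fin 2 =>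
        v ⟨0, by omega⟩ = 0 ∧
        (Finset.univ.filter (fun r : Fin n => v r = 0)).card = n / 2)).card =
      Nat.choose (n - 1) (n / 2 - 1) := by
  set z : Fin n := ⟨0, by omega⟩ with hz
  set V := Finset.univ.filter (fun v : Fin n → Fin 2 =>
        v z = 0 ∧ (Finset.univ.filter (fun r : Fin n => v r = 0)).card = n / 2) with hV
  have hmem : ∀ v : Fin n → Fin 2, v ∈ V ↔
      v z = 0 ∧ (Finset.univ.filter (fun r : Fin n => v r = 0)).card = n / 2 := by
    intro v; simp [hV]
  -- cardinality
  have hcard : V.card = Nat.choose (n - 1) (n / 2 - 1) := by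
    have hT : ((Finset.univ.erase z).powersetCard (n / 2 - 1)).card
        = Nat.choose (n - 1) (n / 2 - 1) := by
      rw [Finset.card_powersetCard, Finset.card_erase_of_mem (Finset.mem_univ z),
        Finset.card_univ, Fintype.card_fin]
    rw [← hT]
    apply Finset.card_bij' (i := fun v _ => (Finset.univ.filter (fun r => v r = 0)).erase z)
      (j := fun S _ => fun r => if r = z ∨ r ∈ S then 0 else 1)
    case hi =>
      intro v hv
      rw [hmem] at hv
      rw [Finset.mem_powersetCard]
      constructor
      · intro x hx
        simp only [Finset.mem_erase, Finset.mem_filter] at hx ⊢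
        exact ⟨hx.1, Finset.mem_univ x⟩
      · rw [Finset.card_erase_of_mem (by simp [hv.1]), hv.2]
    case hj =>
      intro S hS
      rw [Finset.mem_powersetCard] at hS
      have hzS : z ∉ S := fun h => (Finset.mem_erase.mp (hS.1 h)).1 rfl
      rw [hmem]
      constructor
      · simp
      · have : (Finset.univ.filter (fun r : Fin n =>
            (if r = z ∨ r ∈ S then (0 : Fin 2) else 1) = 0)) = insert z S := by
          ext x
          simp only [Finset.mem_filter, Finset.mem_univ, true_and, Finset.mem_insert]
          constructor
          · intro h
            by_contra hc
            push_neg at hc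
            simp [hc.1, hc.2] at h
          · intro h
            rcases h with h | h <;> simp [h]
        rw [this, Finset.card_insert_of_notMem hzS, hS.2]
        omega
    case left_inv =>
      intro v hv
      rw [hmem] at hv
      funext r
      by_cases hr : r = z ∨ r ∈ (Finset.univ.filter (fun r => v r = 0)).erase z
      · simp only [hr, if_true]
        rcases hr with h | h
        · rw [h, hv.1]
        · exact ((Finset.mem_filter.mp (Finset.mem_of_mem_erase h)).2).symm
      · simp only [hr, if_false]
        push_neg at hr
        have : v r ≠ 0 := by
          intro h0
          exact hr.2 (Finset.mem_erase.mpr ⟨hr.1, Finset.mem_filter.mpr ⟨Finset.mem_univ r, h0⟩⟩)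
        rcases fin2cases (v r) with h | h
        · exact absurd h this
        · exact h.symm
    case right_inv =>
      intro S hS
      rw [Finset.mem_powersetCard] at hS
      ext x
      simp only [Finset.mem_erase, Finset.mem_filter, Finset.mem_univ, true_and]
      constructor
      · rintro ⟨hx, h0⟩
        by_contra hc
        simp [hx, hc] at h0
      · intro hx
        have hxz : x ≠ z := (Finset.mem_erase.mp (hS.1 hx)).1
        exact ⟨hxz, by simp [hx]⟩
  refine ⟨⟨?_, ?_⟩, hcard⟩
  · -- 2 ≤ V.card
    rw [hcard]
    have h1 : n - 1 = (n - 2) + 1 := by omega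
    have h2 : n / 2 - 1 = (n / 2 - 2) + 1 := by omega
    rw [h1, h2, Nat.choose_succ_succ]
    simp only [Nat.succ_eq_add_one]
    have p1 : 0 < Nat.choose (n - 2) (n / 2 - 2) := Nat.choose_pos (by omega)
    have p2 : 0 < Nat.choose (n - 2) (n / 2 - 2 + 1) := Nat.choose_pos (by omega)
    omega
  · intro v hinj hmemV α
    have h0 := (hmem _).mp (hmemV 0)
    have h1 := (hmem _).mp (hmemV 1)
    have hne : v 0 ≠ v 1 := fun h => absurd (hinj h) (by decide)
    -- case analysis on α
    rcases fin2cases (α 0) with ha0 | ha0 <;> rcases fin2cases (α 1) with ha1 | ha1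
    · exact ⟨z, fun j => by fin_cases j <;> simp [h0.1, h1.1, ha0, ha1]⟩
    · -- α 0 = 0, α 1 = 1 : need r with v 0 r = 0 and v 1 r = 1
      by_contra hc
      push_neg at hc
      apply hne
      have hsub : (Finset.univ.filter (fun r => v 0 r = 0)) ⊆
          (Finset.univ.filter (fun r => v 1 r = 0)) := by
        intro r hr
        simp only [Finset.mem_filter, Finset.mem_univ, true_and] at hr ⊢
        obtain ⟨j, hj⟩ := hc r
        rcases fin2cases j with h | h <;> subst h
        · simp [hr, ha0] at hj
        · rcases fin2cases (v 1 r) with h | h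
          · exact h
          · exact absurd (by rw [h, ha1]) hj
      have heq := Finset.eq_of_subset_of_card_le hsub (by rw [h0.2, h1.2])
      funext r
      have : (r ∈ Finset.univ.filter (fun r => v 0 r = 0)) ↔
          (r ∈ Finset.univ.filter (fun r => v 1 r = 0)) := by rw [heq]
      simp only [Finset.mem_filter, Finset.mem_univ, true_and] at this
      rcases fin2cases (v 0 r) with h | h
      · rw [h, (this.mp h).symm]
      · rcases fin2cases (v 1 r) with h' | h'
        · exact absurd (this.mpr h') (by rw [h]; decide)
        · rw [h, h']
    · -- α 0 = 1, α 1 = 0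
      by_contra hc
      push_neg at hc
      apply hne
      have hsub : (Finset.univ.filter (fun r => v 1 r = 0)) ⊆
          (Finset.univ.filter (fun r => v 0 r = 0)) := by
        intro r hr
        simp only [Finset.mem_filter, Finset.mem_univ, true_and] at hr ⊢
        obtain ⟨j, hj⟩ := hc r
        rcases fin2cases j with h | h <;> subst h
        · rcases fin2cases (v 0 r) with h | h
          · exact h
          · exact absurd (by rw [h, ha0]) hj
        · simp [hr, ha1] at hj
      have heq := Finset.eq_of_subset_of_card_le hsub (by rw [h0.2, h1.2])
      funext r
      have : (r ∈ Finset.univ.filter (fun r => v 0 r = 0)) ↔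
          (r ∈ Finset.univ.filter (fun r => v 1 r = 0)) := by rw [heq]
      simp only [Finset.mem_filter, Finset.mem_univ, true_and] at this
      rcases fin2cases (v 0 r) with h | h
      · rw [h, (this.mp h).symm]
      · rcases fin2cases (v 1 r) with h' | h'
        · exact absurd (this.mpr h') (by rw [h]; decide)
        · rw [h, h']
    · -- α 0 = 1, α 1 = 1 : need r with both = 1
      by_contra hc
      push_neg at hc
      set A := Finset.univ.filter (fun r => v 0 r = 0) with hA
      set B := Finset.univ.filter (fun r => v 1 r = 0) with hB
      have hcov : (Finset.univ : Finset (Fin n)) ⊆ A ∪ B := by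
        intro r _
        obtain ⟨j, hj⟩ := hc r
        rw [Finset.mem_union]
        rcases fin2cases j with h | h <;> subst h
        · left
          rcases fin2cases (v 0 r) with h | h
          · simp [hA, h]
          · exact absurd (by rw [h, ha0]) hj
        · right
          rcases fin2cases (v 1 r) with h | h
          · simp [hB, h]
          · exact absurd (by rw [h, ha1]) hj
      have hun : n ≤ (A ∪ B).card := by
        calc n = (Finset.univ : Finset (Fin n)).card := by simp
        _ ≤ (A ∪ B).card := Finset.card_le_card hcov
      have hint : 1 ≤ (A ∩ B).card := by
        apply Finset.card_pos.mpr
        exact ⟨z, Finset.mem_inter.mpr ⟨by simp [hA, h0.1], by simp [hB, h1.1]⟩⟩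
      have hsum := Finset.card_union_add_card_inter A B
      rw [h0.2, h1.2] at hsum
      have : n / 2 * 2 ≤ n := Nat.div_mul_le_self n 2
      omega
end

section
/- Let n ≥ 4. Every perfect subset V of (Fin n → Fin 2) has cardinality at most C(n−1, ⌊n/2⌋ − 1). -/
set_option linter.unusedSectionVars false

open Finset
open Fin.NatCast
open Fin.CommRing

namespace PerfectAux

section Arcs

variable {n : ℕ} [NeZero n]

/-- enumeration around the circle given by `σ`, starting at position `s`. -/
def e (σ : Equiv.Perm (Fin n)) (s : Fin n) (i : ℕ) : Fin n := σ (s + (i : Fin n))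

/-- `A` is an arc of the cyclic order `σ`. -/
def IsArc (σ : Equiv.Perm (Fin n)) (A : Finset (Fin n)) : Prop :=
  ∃ s : Fin n, A = (Finset.range A.card).image (e σ s)

instance (σ : Equiv.Perm (Fin n)) : DecidablePred (IsArc σ) := fun A =>
  decidable_of_iff (∃ s : Fin n, A = (Finset.range A.card).image (e σ s)) Iff.rfl

instance (A : Finset (Fin n)) : DecidablePred (fun σ : Equiv.Perm (Fin n) => IsArc σ A) :=
  fun σ => decidable_of_iff (∃ s : Fin n, A = (Finset.range A.card).image (e σ s)) Iff.rfl

lemma natCast_fin_inj {i j : ℕ} (hi : i < n) (hj : j < n) (h : (i : Fin n) = j) : i = j := by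
  have := congrArg Fin.val h
  rwa [Fin.val_natCast, Fin.val_natCast, Nat.mod_eq_of_lt hi, Nat.mod_eq_of_lt hj] at this

lemma e_injOn (σ : Equiv.Perm (Fin n)) (s : Fin n) :
    Set.InjOn (e σ s) (Finset.range n) := by
  intro i hi j hj h
  simp only [Finset.coe_range, Set.mem_Iio] at hi hj
  have h2 : s + (i : Fin n) = s + (j : Fin n) := σ.injective h
  exact natCast_fin_inj hi hj (add_left_cancel h2)

lemma card_le_n (A : Finset (Fin n)) : A.card ≤ n := by
  simpa using Finset.card_le_card (Finset.subset_univ A)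

lemma mem_arc_iff {σ : Equiv.Perm (Fin n)} {s : Fin n} {A : Finset (Fin n)}
    (hA : A = (Finset.range A.card).image (e σ s)) {i : ℕ} (hi : i < n) :
    e σ s i ∈ A ↔ i < A.card := by
  constructor
  · intro h
    rw [hA] at h
    obtain ⟨j, hj, hji⟩ := Finset.mem_image.1 h
    rw [Finset.mem_range] at hj
    have hjn : j < n := lt_of_lt_of_le hj (card_le_n A)
    have := e_injOn σ s (by simpa using hjn) (by simpa using hi) hji
    omega
  · intro h
    rw [hA]
    exact Finset.mem_image.2 ⟨i, Finset.mem_range.2 h, rfl⟩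

lemma e_shift (σ : Equiv.Perm (Fin n)) (s : Fin n) (k i : ℕ) :
    e σ (s + (k : Fin n)) i = e σ s (k + i) := by
  simp [e, add_assoc, Nat.cast_add]

lemma arc_start_unique {σ : Equiv.Perm (Fin n)} {s s' : Fin n} {A : Finset (Fin n)}
    (h1 : 0 < A.card) (h2 : A.card < n)
    (hA : A = (Finset.range A.card).image (e σ s))
    (hA' : A = (Finset.range A.card).image (e σ s')) : s = s' := by
  set k := A.card with hk
  set d := (s' - s).val with hd
  have hdn : d < n := (s' - s).isLt
  have hcast : ((d : ℕ) : Fin n) = s' - s := Fin.cast_val_eq_self _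
  have hs' : s + (d : Fin n) = s' := by rw [hcast]; ring
  -- e σ s d = σ s' ∈ A
  have hmem : e σ s d ∈ A := by
    have : e σ s d = e σ s' 0 := by simp [e, hs']
    rw [this, mem_arc_iff hA' (Nat.pos_of_ne_zero (NeZero.ne n))]
    omega
  have hdk : d < k := (mem_arc_iff hA hdn).1 hmem
  rcases Nat.eq_zero_or_pos d with h0 | hpos
  · have : (d : Fin n) = 0 := by rw [h0]; simp
    rw [this, add_zero] at hs'
    exact hs'
  · exfalso
    -- e σ s (d-1) ∈ A but it equals e σ s' (n-1) ∉ A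
    have hmem1 : e σ s (d - 1) ∈ A := by
      rw [mem_arc_iff hA (by omega)]; omega
    have heq : e σ s (d - 1) = e σ s' (n - 1) := by
      have c1 : ((d - 1 : ℕ) : Fin n) = (d : Fin n) - 1 := by
        have h' : (((d - 1) + 1 : ℕ) : Fin n) = (d : Fin n) := by congr 1; omega
        rw [Nat.cast_add, Nat.cast_one] at h'
        linear_combination h'
      have c2 : ((n - 1 : ℕ) : Fin n) = -1 := by
        have h' : (((n - 1) + 1 : ℕ) : Fin n) = ((n : ℕ) : Fin n) := by congr 1; omega
        rw [Nat.cast_add, Nat.cast_one, Fin.natCast_self] at h'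
        linear_combination h'
      simp only [e, c1, c2]
      congr 1
      rw [← hs']
      ring
    rw [heq, mem_arc_iff hA' (by omega)] at hmem1
    omega

lemma arc_subset {σ : Equiv.Perm (Fin n)} {s : Fin n} {A B : Finset (Fin n)}
    (hA : A = (Finset.range A.card).image (e σ s))
    (hB : B = (Finset.range B.card).image (e σ s))
    (h : A.card ≤ B.card) : A ⊆ B := by
  rw [hA, hB]
  exact Finset.image_subset_image (by simpa using Finset.range_subset_range.2 h)

lemma arc_compl {σ : Equiv.Perm (Fin n)} {A : Finset (Fin n)} {s : Fin n}
    (hA : A = (Finset.range A.card).image (e σ s)) :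
    Aᶜ = (Finset.range Aᶜ.card).image (e σ (s + (A.card : Fin n))) := by
  set k := A.card with hk
  have hkn : k ≤ n := card_le_n A
  have hcc : Aᶜ.card = n - k := by simp [Finset.card_compl, hk]
  have hsub : (Finset.range Aᶜ.card).image (e σ (s + (k : Fin n))) ⊆ Aᶜ := by
    intro x hx
    obtain ⟨i, hi, hix⟩ := Finset.mem_image.1 hx
    rw [Finset.mem_range, hcc] at hi
    rw [e_shift] at hix
    rw [Finset.mem_compl, ← hix]
    rw [mem_arc_iff hA (by omega)]
    omega
  have hcard : ((Finset.range Aᶜ.card).image (e σ (s + (k : Fin n)))).card = Aᶜ.card := by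
    rw [Finset.card_image_of_injOn]
    · simp
    · intro i hi j hj hij
      simp only [Finset.coe_range, Set.mem_Iio] at hi hj
      have hi' : i < n := by omega
      have hj' : j < n := by omega
      exact e_injOn σ (s + (k : Fin n)) (by simpa using hi') (by simpa using hj') hij
  exact (Finset.eq_of_subset_of_card_le hsub (le_of_eq hcard.symm)).symm


lemma card_arcs_le (F : Finset (Finset (Fin n)))
    (hne : ∀ A ∈ F, A.Nonempty) (hnu : ∀ A ∈ F, A ≠ Finset.univ)
    (hanti : ∀ A ∈ F, ∀ B ∈ F, A ⊆ B → A = B)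
    (hint : ∀ A ∈ F, ∀ B ∈ F, A ≠ B → (A ∩ B).Nonempty)
    (hco : ∀ A ∈ F, ∀ B ∈ F, A ≠ B → A ∪ B ≠ Finset.univ)
    (σ : Equiv.Perm (Fin n)) :
    2 * (F.filter (fun A => IsArc σ A)).card ≤ n := by
  classical
  set T := F.filter (fun A => IsArc σ A) with hT
  set G := T ∪ T.image compl with hG
  -- membership characterization helpers
  have hTsub : T ⊆ F := Finset.filter_subset _ _
  have hint' : ∀ A ∈ F, ∀ B ∈ F, (A ∩ B).Nonempty := by
    intro A hA B hB
    by_cases h : A = B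
    · subst h; simpa using hne A hA
    · exact hint A hA B hB h
  have hco' : ∀ A ∈ F, ∀ B ∈ F, A ∪ B ≠ Finset.univ := by
    intro A hA B hB
    by_cases h : A = B
    · subst h; simpa using hnu A hA
    · exact hco A hA B hB h
  -- G is an antichain
  have hGanti : ∀ X ∈ G, ∀ Y ∈ G, X ⊆ Y → X = Y := by
    intro X hX Y hY hXY
    rw [hG, Finset.mem_union] at hX hY
    rcases hX with hX | hX <;> rcases hY with hY | hY
    · exact hanti X (hTsub hX) Y (hTsub hY) hXY
    · obtain ⟨B, hB, rfl⟩ := Finset.mem_image.1 hY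
      exfalso
      obtain ⟨x, hx⟩ := hint' X (hTsub hX) B (hTsub hB)
      rw [Finset.mem_inter] at hx
      exact (Finset.mem_compl.1 (hXY hx.1)) hx.2
    · obtain ⟨A, hA, rfl⟩ := Finset.mem_image.1 hX
      exfalso
      apply hco' A (hTsub hA) Y (hTsub hY)
      apply Finset.eq_univ_of_forall
      intro x
      by_cases h : x ∈ A
      · exact Finset.mem_union.2 (Or.inl h)
      · exact Finset.mem_union.2 (Or.inr (hXY (Finset.mem_compl.2 h)))
    · obtain ⟨A, hA, rfl⟩ := Finset.mem_image.1 hX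
      obtain ⟨B, hB, rfl⟩ := Finset.mem_image.1 hY
      have := hanti B (hTsub hB) A (hTsub hA) (Finset.compl_subset_compl.1 hXY)
      rw [this]
  -- every X in G is an arc with card in (0, n)
  have hGarc : ∀ X ∈ G, (∃ s : Fin n, X = (Finset.range X.card).image (e σ s))
      ∧ 0 < X.card ∧ X.card < n := by
    intro X hX
    rw [hG, Finset.mem_union] at hX
    have hcardF : ∀ A ∈ T, 0 < A.card ∧ A.card < n := by
      intro A hA
      constructor
      · exact Finset.card_pos.2 (hne A (hTsub hA))
      · have := hnu A (hTsub hA)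
        have hle : A.card ≤ n := by simpa using Finset.card_le_card (Finset.subset_univ A)
        rcases lt_or_eq_of_le hle with h | h
        · exact h
        · exfalso; apply this
          apply Finset.eq_univ_of_card
          simpa using h
    rcases hX with hX | hX
    · obtain ⟨_, harc⟩ := Finset.mem_filter.1 hX
      exact ⟨harc, hcardF X hX⟩
    · obtain ⟨A, hA, rfl⟩ := Finset.mem_image.1 hX
      obtain ⟨_, s, harc⟩ := Finset.mem_filter.1 hA
      have hc := hcardF A hA
      have hcc : (Aᶜ).card = n - A.card := by simp [Finset.card_compl]
      exact ⟨⟨s + (A.card : Fin n), arc_compl harc⟩, by omega, by omega⟩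
  -- the start map is injective on G
  set ℓ : Finset (Fin n) → Fin n := fun X =>
    if h : ∃ s : Fin n, X = (Finset.range X.card).image (e σ s) then h.choose else 0 with hℓ
  have hℓspec : ∀ X ∈ G, X = (Finset.range X.card).image (e σ (ℓ X)) := by
    intro X hX
    obtain ⟨h, _, _⟩ := hGarc X hX
    simp only [hℓ, dif_pos h]
    exact h.choose_spec
  have hinj : Set.InjOn ℓ G := by
    intro X hX Y hY hXY
    have hX' := hℓspec X (by simpa using hX)
    have hY' := hℓspec Y (by simpa using hY)
    rw [hXY] at hX'
    rcases le_total X.card Y.card with h | h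
    · exact hGanti X (by simpa using hX) Y (by simpa using hY) (arc_subset hX' hY' h)
    · exact (hGanti Y (by simpa using hY) X (by simpa using hX) (arc_subset hY' hX' h)).symm
  have hGn : G.card ≤ n := by
    have := Finset.card_le_card_of_injOn ℓ (fun x _ => Finset.mem_univ (ℓ x)) hinj
    simpa using this
  -- G.card = 2 * T.card
  have hdisj : Disjoint T (T.image compl) := by
    rw [Finset.disjoint_left]
    rintro A hA hA'
    obtain ⟨B, hB, hBA⟩ := Finset.mem_image.1 hA'
    obtain ⟨x, hx⟩ := hint' A (hTsub hA) B (hTsub hB)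
    rw [Finset.mem_inter] at hx
    rw [← hBA] at hx
    exact (Finset.mem_compl.1 hx.1) hx.2
  have hGcard : G.card = 2 * T.card := by
    rw [hG, Finset.card_union_of_disjoint hdisj,
      Finset.card_image_of_injective _ compl_injective]
    ring
  omega


section build
variable (A : Finset (Fin n))

/-- the permutation built from a start, an enumeration of `A` and one of `Aᶜ`. -/
noncomputable def buildPerm (s : Fin n) (f : Fin A.card ≃ {x // x ∈ A})
    (g : Fin (n - A.card) ≃ {x // x ∈ Aᶜ}) : Equiv.Perm (Fin n) := by
  classical
  have hkn : A.card + (n - A.card) = n := by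
    have := Finset.card_le_card (Finset.subset_univ A)
    simp only [Finset.card_univ, Fintype.card_fin] at this
    omega
  exact (Equiv.subRight s).trans <| (finCongr hkn.symm).trans <|
    finSumFinEquiv.symm.trans <| (f.sumCongr g).trans <|
    (Equiv.sumCongr (Equiv.subtypeEquivRight (fun x => by simp))
      (Equiv.subtypeEquivRight (fun x => by simp))).trans
    (Equiv.Set.sumCompl (↑A : Set (Fin n)))

lemma buildPerm_apply_lt (s : Fin n) (f : Fin A.card ≃ {x // x ∈ A})
    (g : Fin (n - A.card) ≃ {x // x ∈ Aᶜ}) {i : ℕ} (hik : i < A.card) :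
    buildPerm A s f g (s + (i : Fin n)) = ↑(f ⟨i, hik⟩) := by
  classical
  have hkn : A.card ≤ n := by
    simpa using Finset.card_le_card (Finset.subset_univ A)
  have hin : i < n := lt_of_lt_of_le hik hkn
  simp only [buildPerm, Equiv.trans_apply, Equiv.subRight_apply, add_sub_cancel_left]
  have hval : (((i : ℕ) : Fin n)).val = i := by
    rw [Fin.val_natCast]; exact Nat.mod_eq_of_lt hin
  have hcast : (finCongr (by omega : n = A.card + (n - A.card)) ((i : ℕ) : Fin n))
      = Fin.castAdd (n - A.card) ⟨i, hik⟩ := by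
    apply Fin.ext
    simpa using hval
  rw [hcast, finSumFinEquiv_symm_apply_castAdd]
  simp only [Equiv.sumCongr_apply, Sum.map_inl]
  exact Equiv.Set.sumCompl_apply_inl (↑A : Set (Fin n)) _

lemma buildPerm_apply_ge (s : Fin n) (f : Fin A.card ≃ {x // x ∈ A})
    (g : Fin (n - A.card) ≃ {x // x ∈ Aᶜ}) {i : ℕ} (hki : A.card ≤ i) (hin : i < n) :
    buildPerm A s f g (s + (i : Fin n)) = ↑(g ⟨i - A.card, by omega⟩) := by
  classical
  simp only [buildPerm, Equiv.trans_apply, Equiv.subRight_apply, add_sub_cancel_left]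
  have hval : (((i : ℕ) : Fin n)).val = i := by
    rw [Fin.val_natCast]; exact Nat.mod_eq_of_lt hin
  have hcast : (finCongr (by omega : n = A.card + (n - A.card)) ((i : ℕ) : Fin n))
      = Fin.natAdd A.card ⟨i - A.card, by omega⟩ := by
    apply Fin.ext
    simp only [finCongr_apply, Fin.coe_cast, Fin.natAdd_mk]
    omega
  rw [hcast, finSumFinEquiv_symm_apply_natAdd]
  have : ((g ⟨i - A.card, by omega⟩ : {x // x ∈ Aᶜ}) : Fin n) ∈ Aᶜ := (g _).2
  simp only [Equiv.sumCongr_apply, Sum.map_inr]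
  exact Equiv.Set.sumCompl_apply_inr (↑A : Set (Fin n)) _

lemma buildPerm_isArc (s : Fin n) (f : Fin A.card ≃ {x // x ∈ A})
    (g : Fin (n - A.card) ≃ {x // x ∈ Aᶜ}) :
    A = (Finset.range A.card).image (e (buildPerm A s f g) s) := by
  have hkn : A.card ≤ n := by
    simpa using Finset.card_le_card (Finset.subset_univ A)
  have hsub : (Finset.range A.card).image (e (buildPerm A s f g) s) ⊆ A := by
    intro x hx
    obtain ⟨i, hi, hix⟩ := Finset.mem_image.1 hx
    rw [Finset.mem_range] at hi
    rw [← hix]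
    show buildPerm A s f g (s + (i : Fin n)) ∈ A
    rw [buildPerm_apply_lt A s f g hi]
    exact (f _).2
  have hcard : ((Finset.range A.card).image (e (buildPerm A s f g) s)).card = A.card := by
    rw [Finset.card_image_of_injOn, Finset.card_range]
    intro i hi j hj hij
    simp only [Finset.coe_range, Set.mem_Iio] at hi hj
    exact e_injOn _ s (by simp; omega) (by simp; omega) hij
  exact (Finset.eq_of_subset_of_card_le hsub (le_of_eq hcard.symm)).symm

end build

lemma count_perms_arc (A : Finset (Fin n)) (h1 : 0 < A.card) (h2 : A.card < n) :
    n * (Nat.factorial A.card) * (Nat.factorial (n - A.card)) ≤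
      (Finset.univ.filter (fun σ : Equiv.Perm (Fin n) => IsArc σ A)).card := by
  classical
  set k := A.card with hk
  have hcA : Fintype.card {x // x ∈ A} = k := by simp [hk]
  have hcC : Fintype.card {x // x ∈ Aᶜ} = n - k := by
    simp [Finset.card_compl, hk]
  have eA : Fin k ≃ {x // x ∈ A} := (Fintype.equivFinOfCardEq hcA).symm
  have eC : Fin (n - k) ≃ {x // x ∈ Aᶜ} := (Fintype.equivFinOfCardEq hcC).symm
  -- the injection
  let Φ : Fin n × (Fin k ≃ {x // x ∈ A}) × (Fin (n - k) ≃ {x // x ∈ Aᶜ}) →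
      {σ : Equiv.Perm (Fin n) // IsArc σ A} :=
    fun p => ⟨buildPerm A p.1 p.2.1 p.2.2, p.1, buildPerm_isArc A p.1 p.2.1 p.2.2⟩
  have hΦinj : Function.Injective Φ := by
    rintro ⟨s, f, g⟩ ⟨s', f', g'⟩ hpq
    have hσ : buildPerm A s f g = buildPerm A s' f' g' := congrArg Subtype.val hpq
    have hss : s = s' :=
      arc_start_unique h1 h2 (buildPerm_isArc A s f g)
        (hσ ▸ buildPerm_isArc A s' f' g')
    subst hss
    have hf : f = f' := by
      apply Equiv.ext
      intro j
      apply Subtype.ext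
      have e1 := buildPerm_apply_lt A s f g (i := j.val) j.isLt
      have e2 := buildPerm_apply_lt A s f' g' (i := j.val) j.isLt
      rw [hσ] at e1
      rw [Fin.eta] at e1 e2
      rw [← e1, ← e2]
    have hg : g = g' := by
      apply Equiv.ext
      intro j
      apply Subtype.ext
      have hj : k + j.val < n := by omega
      have e1 := buildPerm_apply_ge A s f g (i := k + j.val) (by omega) hj
      have e2 := buildPerm_apply_ge A s f' g' (i := k + j.val) (by omega) hj
      rw [hσ] at e1
      have hjj : (⟨k + j.val - k, by omega⟩ : Fin (n - k)) = j := by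
        apply Fin.ext; simp
      rw [hjj] at e1 e2
      rw [← e1, ← e2]
    rw [hf, hg]
  have hcard := Fintype.card_le_of_injective Φ hΦinj
  have hsrc : Fintype.card (Fin n × (Fin k ≃ {x // x ∈ A}) × (Fin (n - k) ≃ {x // x ∈ Aᶜ}))
      = n * (Nat.factorial k) * (Nat.factorial (n - k)) := by
    rw [Fintype.card_prod, Fintype.card_prod, Fintype.card_equiv eA, Fintype.card_equiv eC]
    simp [mul_assoc]
  have htgt : Fintype.card {σ : Equiv.Perm (Fin n) // IsArc σ A}
      = (Finset.univ.filter (fun σ : Equiv.Perm (Fin n) => IsArc σ A)).card := by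
    rw [Fintype.card_subtype]
  rw [hsrc, htgt] at hcard
  exact hcard


lemma middle_factorial_le {k : ℕ} (hk : k ≤ n) :
    Nat.factorial (n / 2) * Nat.factorial (n - n / 2) ≤
      Nat.factorial k * Nat.factorial (n - k) := by
  have hm : n / 2 ≤ n := Nat.div_le_self n 2
  have h1 := Nat.choose_mul_factorial_mul_factorial hk
  have h2 := Nat.choose_mul_factorial_mul_factorial hm
  have h3 : n.choose k ≤ n.choose (n / 2) := Nat.choose_le_middle k n
  have hpos : 0 < n.choose (n / 2) := Nat.choose_pos hm
  have : n.choose (n / 2) * (Nat.factorial (n / 2) * Nat.factorial (n - n / 2)) ≤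
      n.choose (n / 2) * (Nat.factorial k * Nat.factorial (n - k)) := by
    calc n.choose (n / 2) * (Nat.factorial (n / 2) * Nat.factorial (n - n / 2))
        = n.choose (n / 2) * Nat.factorial (n / 2) * Nat.factorial (n - n / 2) := by ring
      _ = Nat.factorial n := h2
      _ = n.choose k * Nat.factorial k * Nat.factorial (n - k) := h1.symm
      _ ≤ n.choose (n / 2) * (Nat.factorial k * Nat.factorial (n - k)) := by
          rw [mul_assoc]
          exact Nat.mul_le_mul_right _ h3
  exact Nat.le_of_mul_le_mul_left this hpos

theorem family_bound (hn : 4 ≤ n) (F : Finset (Finset (Fin n)))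
    (hne : ∀ A ∈ F, A.Nonempty) (hnu : ∀ A ∈ F, A ≠ Finset.univ)
    (hanti : ∀ A ∈ F, ∀ B ∈ F, A ⊆ B → A = B)
    (hint : ∀ A ∈ F, ∀ B ∈ F, A ≠ B → (A ∩ B).Nonempty)
    (hco : ∀ A ∈ F, ∀ B ∈ F, A ≠ B → A ∪ B ≠ Finset.univ) :
    F.card ≤ Nat.choose (n - 1) (n / 2 - 1) := by
  classical
  set m := n / 2 with hm
  have hm2 : 2 ≤ m := by omega
  have hmn : m ≤ n - 1 := by omega
  have hcards : ∀ A ∈ F, 0 < A.card ∧ A.card < n := by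
    intro A hA
    refine ⟨Finset.card_pos.2 (hne A hA), ?_⟩
    have hle : A.card ≤ n := by simpa using Finset.card_le_card (Finset.subset_univ A)
    rcases lt_or_eq_of_le hle with h | h
    · exact h
    · exact absurd (Finset.eq_univ_of_card A (by simpa using h)) (hnu A hA)
  -- the double counting
  have key : F.card * (n * Nat.factorial m * Nat.factorial (n - m)) ≤
      m * Nat.factorial n := by
    calc F.card * (n * Nat.factorial m * Nat.factorial (n - m))
        = ∑ _A ∈ F, n * Nat.factorial m * Nat.factorial (n - m) := by
          rw [Finset.sum_const, smul_eq_mul]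
      _ ≤ ∑ A ∈ F, (Finset.univ.filter (fun σ : Equiv.Perm (Fin n) => IsArc σ A)).card := by
          apply Finset.sum_le_sum
          intro A hA
          obtain ⟨h1, h2⟩ := hcards A hA
          calc n * Nat.factorial m * Nat.factorial (n - m)
              ≤ n * Nat.factorial A.card * Nat.factorial (n - A.card) := by
                rw [mul_assoc, mul_assoc]
                exact Nat.mul_le_mul_left n (middle_factorial_le (le_of_lt h2))
            _ ≤ _ := count_perms_arc A h1 h2
      _ = ∑ σ ∈ (Finset.univ : Finset (Equiv.Perm (Fin n))),
            (F.filter (fun A => IsArc σ A)).card := by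
          simp only [Finset.card_filter]
          exact Finset.sum_comm
      _ ≤ ∑ _σ ∈ (Finset.univ : Finset (Equiv.Perm (Fin n))), m := by
          apply Finset.sum_le_sum
          intro σ _
          have := card_arcs_le F hne hnu hanti hint hco σ
          omega
      _ = m * Nat.factorial n := by
          rw [Finset.sum_const, smul_eq_mul, Finset.card_univ, Fintype.card_perm,
            Fintype.card_fin, mul_comm]
  -- arithmetic
  have hnpos : 0 < n := by omega
  have hmpos : 0 < m := by omega
  have e1 : m * Nat.factorial (m - 1) = Nat.factorial m := Nat.mul_factorial_pred hmpos.ne'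
  have e2 : n * Nat.factorial (n - 1) = Nat.factorial n := Nat.mul_factorial_pred hnpos.ne'
  have step1 : F.card * (Nat.factorial (m - 1) * Nat.factorial (n - m)) ≤
      Nat.factorial (n - 1) := by
    have h : (F.card * (Nat.factorial (m - 1) * Nat.factorial (n - m))) * (n * m) ≤
        Nat.factorial (n - 1) * (n * m) := by
      calc (F.card * (Nat.factorial (m - 1) * Nat.factorial (n - m))) * (n * m)
          = F.card * (n * (m * Nat.factorial (m - 1)) * Nat.factorial (n - m)) := by ring
        _ = F.card * (n * Nat.factorial m * Nat.factorial (n - m)) := by rw [e1]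
        _ ≤ m * Nat.factorial n := key
        _ = m * (n * Nat.factorial (n - 1)) := by rw [e2]
        _ = Nat.factorial (n - 1) * (n * m) := by ring
    exact Nat.le_of_mul_le_mul_right h (by positivity)
  have e4 : n - 1 - (m - 1) = n - m := by omega
  have e3 : Nat.choose (n - 1) (m - 1) * Nat.factorial (m - 1) * Nat.factorial (n - m) =
      Nat.factorial (n - 1) := by
    have := Nat.choose_mul_factorial_mul_factorial (show m - 1 ≤ n - 1 by omega)
    rwa [e4] at this
  have step2 : F.card * (Nat.factorial (m - 1) * Nat.factorial (n - m)) ≤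
      Nat.choose (n - 1) (m - 1) * (Nat.factorial (m - 1) * Nat.factorial (n - m)) := by
    rw [mul_assoc] at e3
    exact step1.trans_eq e3.symm
  have hfpos : 0 < Nat.factorial (m - 1) * Nat.factorial (n - m) := by positivity
  exact Nat.le_of_mul_le_mul_right
    (by calc F.card * (Nat.factorial (m - 1) * Nat.factorial (n - m)) ≤ _ := step2) hfpos


end Arcs

variable {n : ℕ}

/-- support of a 0-1 vector -/
def supp (v : Fin n → Fin 2) : Finset (Fin n) := Finset.univ.filter (fun i => v i = 1)

lemma mem_supp {v : Fin n → Fin 2} {i : Fin n} : i ∈ supp v ↔ v i = 1 := by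
  simp [supp]

lemma supp_injective : Function.Injective (supp (n := n)) := by
  intro v w h
  funext i
  have h2 : ∀ x : Fin 2, x = 0 ∨ x = 1 := by decide
  have := congrArg (fun S => i ∈ S) h
  simp only [mem_supp, eq_iff_iff] at this
  rcases h2 (v i) with h3 | h3 <;> rcases h2 (w i) with h4 | h4 <;> simp_all

lemma pair_inj {v w : Fin n → Fin 2} (hvw : v ≠ w) : Function.Injective ![v, w] := by
  intro a b hab
  fin_cases a <;> fin_cases b <;> simp_all <;> exact hvw (by simp_all)


end PerfectAux

open PerfectAux in
theorem perfect_upper_bound (n : ℕ) (hn : 4 ≤ n) (V : Finset (Fin n → Fin 2))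
    (hV : TwisePerfect 2 2 n V) :
    V.card ≤ Nat.choose (n - 1) (n / 2 - 1) := by
  classical
  haveI : NeZero n := ⟨by omega⟩
  obtain ⟨hV2, hVp⟩ := hV
  set F := V.image supp with hF
  -- basic pair facts
  have pairs : ∀ v ∈ V, ∀ w ∈ V, v ≠ w → ∀ α : Fin 2 → Fin 2,
      ∃ r : Fin n, v r = α 0 ∧ w r = α 1 := by
    intro v hv w hw hvw α
    obtain ⟨r, hr⟩ := hVp ![v, w] (pair_inj hvw)
      (by intro j; fin_cases j <;> simpa) α
    exact ⟨r, by simpa using hr 0, by simpa using hr 1⟩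
  have hint : ∀ A ∈ F, ∀ B ∈ F, A ≠ B → (A ∩ B).Nonempty := by
    intro A hA B hB hAB
    obtain ⟨v, hv, rfl⟩ := Finset.mem_image.1 hA
    obtain ⟨w, hw, rfl⟩ := Finset.mem_image.1 hB
    have hvw : v ≠ w := fun h => hAB (by rw [h])
    obtain ⟨r, h1, h2⟩ := pairs v hv w hw hvw ![1, 1]
    exact ⟨r, Finset.mem_inter.2 ⟨mem_supp.2 (by simpa using h1), mem_supp.2 (by simpa using h2)⟩⟩
  have hco : ∀ A ∈ F, ∀ B ∈ F, A ≠ B → A ∪ B ≠ Finset.univ := by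
    intro A hA B hB hAB hu
    obtain ⟨v, hv, rfl⟩ := Finset.mem_image.1 hA
    obtain ⟨w, hw, rfl⟩ := Finset.mem_image.1 hB
    have hvw : v ≠ w := fun h => hAB (by rw [h])
    obtain ⟨r, h1, h2⟩ := pairs v hv w hw hvw ![0, 0]
    have hr : r ∈ supp v ∪ supp w := hu ▸ Finset.mem_univ r
    rcases Finset.mem_union.1 hr with h | h <;> rw [mem_supp] at h <;> simp_all
  have hanti : ∀ A ∈ F, ∀ B ∈ F, A ⊆ B → A = B := by
    intro A hA B hB hsub
    by_contra hAB
    obtain ⟨v, hv, rfl⟩ := Finset.mem_image.1 hA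
    obtain ⟨w, hw, rfl⟩ := Finset.mem_image.1 hB
    have hvw : v ≠ w := fun h => hAB (by rw [h])
    obtain ⟨r, h1, h2⟩ := pairs v hv w hw hvw ![1, 0]
    have : r ∈ supp w := hsub (mem_supp.2 (by simpa using h1))
    rw [mem_supp] at this
    simp_all
  have hne : ∀ A ∈ F, A.Nonempty := by
    intro A hA
    obtain ⟨v, hv, rfl⟩ := Finset.mem_image.1 hA
    obtain ⟨w, hw, hwv⟩ := Finset.exists_mem_ne (s := V) (by omega) v
    have hsw : supp w ∈ F := Finset.mem_image_of_mem supp hw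
    have hAB : supp v ≠ supp w := fun h => hwv (supp_injective h.symm)
    obtain ⟨x, hx⟩ := hint _ hA _ hsw hAB
    exact ⟨x, (Finset.mem_inter.1 hx).1⟩
  have hnu : ∀ A ∈ F, A ≠ Finset.univ := by
    intro A hA h
    obtain ⟨v, hv, rfl⟩ := Finset.mem_image.1 hA
    obtain ⟨w, hw, hwv⟩ := Finset.exists_mem_ne (s := V) (by omega) v
    have hsw : supp w ∈ F := Finset.mem_image_of_mem supp hw
    have hAB : supp v ≠ supp w := fun h => hwv (supp_injective h.symm)
    exact hco _ hA _ hsw hAB (by rw [h]; simp)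
  have hcard : F.card = V.card := Finset.card_image_of_injective V supp_injective
  rw [← hcard]
  exact family_bound hn F hne hnu hanti hint hco
end
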